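/- Let P be a g-weakly 2-absorbing ideal of a G-graded ring R and (x, y, z) a g-triple-zero of P with x, y, z ∈ R_g. Then x R_e y P_g = {0}. -/
import Mathlib


variable {G R : Type*} [AddGroup G] [DecidableEq G] [Ring R]

/-- A two-sided ideal is graded if it contains all homogeneous components of its elements. -/
def IsGradedIdeal (𝒜 : G → AddSubgroup R) [GradedRing 𝒜] (P : TwoSidedIdeal R) : Prop :=
  ∀ a ∈ P, ∀ g : G, (DirectSum.decompose 𝒜 a g : R) ∈ P

/-- `P` is a `g`-2-absorbing ideal: `P` is a graded ideal with `P_g ≠ R_g`, and for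
`x, y, z ∈ R_g`, `x R_e y R_e z ⊆ P` implies `xy ∈ P` or `yz ∈ P` or `xz ∈ P`. -/
def IsG2Absorbing (𝒜 : G → AddSubgroup R) [GradedRing 𝒜] (g : G) (P : TwoSidedIdeal R) : Prop :=
  IsGradedIdeal 𝒜 P ∧ (∃ x ∈ 𝒜 g, x ∉ P) ∧
    ∀ x y z : R, x ∈ 𝒜 g → y ∈ 𝒜 g → z ∈ 𝒜 g →
      (∀ r s : R, r ∈ 𝒜 0 → s ∈ 𝒜 0 → x * r * y * s * z ∈ P) →
      x * y ∈ P ∨ y * z ∈ P ∨ x * z ∈ P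

/-- `P` is a `g`-weakly 2-absorbing ideal: `P` is a graded ideal with `P_g ≠ R_g`, and for
`x, y, z ∈ R_g`, `0 ≠ x R_e y R_e z ⊆ P` implies `xy ∈ P` or `yz ∈ P` or `xz ∈ P`. -/
def IsGWeakly2Absorbing (𝒜 : G → AddSubgroup R) [GradedRing 𝒜] (g : G)
    (P : TwoSidedIdeal R) : Prop :=
  IsGradedIdeal 𝒜 P ∧ (∃ x ∈ 𝒜 g, x ∉ P) ∧
    ∀ x y z : R, x ∈ 𝒜 g → y ∈ 𝒜 g → z ∈ 𝒜 g →
      (∃ r s : R, r ∈ 𝒜 0 ∧ s ∈ 𝒜 0 ∧ x * r * y * s * z ≠ 0) →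
      (∀ r s : R, r ∈ 𝒜 0 → s ∈ 𝒜 0 → x * r * y * s * z ∈ P) →
      x * y ∈ P ∨ y * z ∈ P ∨ x * z ∈ P

/-- `(x, y, z)` is a `g`-triple-zero of `P`: `x, y, z ∈ R_g`, `x R_e y R_e z = 0`,
`xy ∉ P`, `yz ∉ P` and `xz ∉ P`. -/
def IsGTripleZero (𝒜 : G → AddSubgroup R) (g : G) (P : TwoSidedIdeal R) (x y z : R) : Prop :=
  x ∈ 𝒜 g ∧ y ∈ 𝒜 g ∧ z ∈ 𝒜 g ∧
    (∀ r s : R, r ∈ 𝒜 0 → s ∈ 𝒜 0 → x * r * y * s * z = 0) ∧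
    x * y ∉ P ∧ y * z ∉ P ∧ x * z ∉ P

/-- Lemma 4.16(1): if `(x, y, z)` is a `g`-triple-zero of a `g`-weakly 2-absorbing ideal `P`,
then `x R_e y P_g = {0}`. -/
theorem stmt12 (𝒜 : G → AddSubgroup R) [GradedRing 𝒜] (g : G) (P : TwoSidedIdeal R)
    (hP : IsGWeakly2Absorbing 𝒜 g P) (x y z : R) (htz : IsGTripleZero 𝒜 g P x y z) :
    ∀ r : R, r ∈ 𝒜 0 → ∀ p ∈ P, p ∈ 𝒜 g → x * r * y * p = 0 := by
  intro r hr p hpP hpg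
  obtain ⟨hx, hy, hz, hzero, hxy, hyz, hxz⟩ := htz
  by_contra hne
  have h1 : (1 : R) ∈ 𝒜 0 := SetLike.one_mem_graded 𝒜
  have := hP.2.2 x y (z + p) hx hy (add_mem hz hpg)
    ⟨r, 1, hr, h1, by
      have h0 : x * r * y * z = 0 := by simpa using hzero r 1 hr h1
      rw [mul_add, mul_one, h0, zero_add]
      exact hne⟩
    (fun r' s' hr' hs' => by
      rw [mul_add, hzero r' s' hr' hs', zero_add]
      exact P.mul_mem_left _ _ hpP)
  rcases this with h | h | h
  · exact hxy h
  · rw [mul_add] at h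
    exact hyz (by simpa using P.sub_mem h (P.mul_mem_left y p hpP))
  · rw [mul_add] at h
    exact hxz (by simpa using P.sub_mem h (P.mul_mem_left x p hpP))
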